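/- arXiv:2309.01635 — 2 statements merged into one kernel-verified Lean document; each statement's English description precedes it below -/
import Mathlib

section
/- Let θ(t) = cos(t√H)u₀ + sin(t√H)/√H · u₁, where H is positive self-adjoint with orthonormal eigenbasis (f_n) and eigenvalues λ_n > 0, and where u₀ = Σ_n (g₀ⁿ/λ_n) f_n, u₁ = Σ_n g₁ⁿ f_n with (g₀ⁿ), (g₁ⁿ) independent standard Gaussians. Then for each fixed t ∈ ℝ, θ(t) has the same law as u₀. -/
open MeasureTheory ProbabilityTheory Set
open scoped ENNReal

namespace WaveAux

open Real

/-- Rotation invariance of the two-dimensional standard gaussian density. -/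
lemma gaussianPDFReal_rot (a b x y : ℝ) (hab : a ^ 2 + b ^ 2 = 1) :
    gaussianPDFReal 0 1 (a * x + b * y) * gaussianPDFReal 0 1 (-b * x + a * y)
      = gaussianPDFReal 0 1 x * gaussianPDFReal 0 1 y := by
  simp only [gaussianPDFReal, sub_zero, NNReal.coe_one, mul_one]
  rw [mul_mul_mul_comm, ← Real.exp_add, mul_mul_mul_comm, ← Real.exp_add]
  congr 2
  have key : (a * x + b * y) ^ 2 + (-b * x + a * y) ^ 2 = x ^ 2 + y ^ 2 := by
    nlinarith [hab]
  field_simp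
  linarith [key]

lemma gaussianPDF_rot (a b : ℝ) (hab : a ^ 2 + b ^ 2 = 1) (p : ℝ × ℝ) :
    gaussianPDF 0 1 (a * p.1 + b * p.2) * gaussianPDF 0 1 (-b * p.1 + a * p.2)
      = gaussianPDF 0 1 p.1 * gaussianPDF 0 1 p.2 := by
  simp only [gaussianPDF_def]
  rw [← ENNReal.ofReal_mul (gaussianPDFReal_nonneg _ _ _),
    ← ENNReal.ofReal_mul (gaussianPDFReal_nonneg _ _ _),
    gaussianPDFReal_rot a b p.1 p.2 hab]

/-- The rotation as a linear map on `ℝ × ℝ`. -/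
noncomputable def rotMap (a b : ℝ) : (ℝ × ℝ) →ₗ[ℝ] (ℝ × ℝ) :=
  LinearMap.prod (a • LinearMap.fst ℝ ℝ ℝ + b • LinearMap.snd ℝ ℝ ℝ)
    ((-b) • LinearMap.fst ℝ ℝ ℝ + a • LinearMap.snd ℝ ℝ ℝ)

lemma rotMap_apply (a b : ℝ) (p : ℝ × ℝ) :
    rotMap a b p = (a * p.1 + b * p.2, -b * p.1 + a * p.2) := by
  simp [rotMap, smul_eq_mul]

lemma det_rotMap (a b : ℝ) : LinearMap.det (rotMap a b) = a ^ 2 + b ^ 2 := by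
  rw [← LinearMap.det_toMatrix (Module.Basis.finTwoProd ℝ), Matrix.det_fin_two]
  simp [LinearMap.toMatrix_apply, rotMap_apply, Module.Basis.finTwoProd_zero, Module.Basis.finTwoProd_one]
  ring

lemma map_rot_volume (a b : ℝ) (hab : a ^ 2 + b ^ 2 = 1) :
    Measure.map (fun p : ℝ × ℝ => (a * p.1 + b * p.2, -b * p.1 + a * p.2))
      (volume : Measure (ℝ × ℝ)) = volume := by
  have hd : LinearMap.det (rotMap a b) ≠ 0 := by rw [det_rotMap, hab]; norm_num
  have := Measure.map_linearMap_addHaar_eq_smul_addHaar (μ := (volume : Measure (ℝ × ℝ))) hd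
  rw [show ⇑(rotMap a b) = fun p : ℝ × ℝ => (a * p.1 + b * p.2, -b * p.1 + a * p.2) from
    funext (rotMap_apply a b)] at this
  rw [this, det_rotMap, hab]
  simp

/-- The product of two standard gaussians, written as an integral of the product density
against Lebesgue measure on `ℝ × ℝ`. -/
lemma gg_apply (E : Set (ℝ × ℝ)) (hE : MeasurableSet E) :
    ((gaussianReal 0 1).prod (gaussianReal 0 1)) E
      = ∫⁻ p : ℝ × ℝ, gaussianPDF 0 1 p.1 * gaussianPDF 0 1 p.2 * E.indicator 1 p := by
  have hf : Measurable (gaussianPDF 0 1) := measurable_gaussianPDF 0 1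
  have hind : Measurable (fun p : ℝ × ℝ => E.indicator (1 : ℝ × ℝ → ℝ≥0∞) p) :=
    measurable_one.indicator hE
  have hslice : ∀ x : ℝ, (gaussianReal 0 1) (Prod.mk x ⁻¹' E)
      = ∫⁻ y, gaussianPDF 0 1 y * E.indicator 1 (x, y) := by
    intro x
    rw [gaussianReal_of_var_ne_zero 0 one_ne_zero,
      withDensity_apply _ (measurable_prodMk_left hE),
      ← lintegral_indicator (measurable_prodMk_left hE) (gaussianPDF 0 1)]
    refine lintegral_congr fun y => ?_
    by_cases h : (x, y) ∈ E <;> simp [Set.indicator, h, Set.mem_preimage]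
  have hinner : Measurable fun x : ℝ => ∫⁻ y, gaussianPDF 0 1 y * E.indicator 1 (x, y) := by
    exact Measurable.lintegral_prod_right ((hf.comp measurable_snd).mul hind)
  calc ((gaussianReal 0 1).prod (gaussianReal 0 1)) E
      = ∫⁻ x, (gaussianReal 0 1) (Prod.mk x ⁻¹' E) ∂(gaussianReal 0 1) :=
        Measure.prod_apply hE
    _ = ∫⁻ x, (∫⁻ y, gaussianPDF 0 1 y * E.indicator 1 (x, y)) ∂(gaussianReal 0 1) :=
        lintegral_congr hslice
    _ = ∫⁻ x, gaussianPDF 0 1 x * ∫⁻ y, gaussianPDF 0 1 y * E.indicator 1 (x, y) := by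
        rw [gaussianReal_of_var_ne_zero 0 one_ne_zero,
          lintegral_withDensity_eq_lintegral_mul _ hf hinner]
        rfl
    _ = ∫⁻ x, ∫⁻ y, gaussianPDF 0 1 x * (gaussianPDF 0 1 y * E.indicator 1 (x, y)) :=
        lintegral_congr fun x =>
          (lintegral_const_mul _ (hf.mul (hind.comp measurable_prodMk_left))).symm
    _ = ∫⁻ p : ℝ × ℝ, gaussianPDF 0 1 p.1 * gaussianPDF 0 1 p.2 * E.indicator 1 p := by
        rw [Measure.volume_eq_prod, lintegral_prod _ ?_]
        · simp_rw [mul_assoc]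
        · exact (((hf.comp measurable_fst).mul
            (hf.comp measurable_snd)).mul hind).aemeasurable

lemma map_rot_gaussian (a b : ℝ) (hab : a ^ 2 + b ^ 2 = 1) :
    Measure.map (fun p : ℝ × ℝ => (a * p.1 + b * p.2, -b * p.1 + a * p.2))
      ((gaussianReal 0 1).prod (gaussianReal 0 1))
      = (gaussianReal 0 1).prod (gaussianReal 0 1) := by
  have hrot : Measurable (fun p : ℝ × ℝ => (a * p.1 + b * p.2, -b * p.1 + a * p.2)) := by
    fun_prop
  ext E hE
  rw [Measure.map_apply hrot hE, gg_apply _ (hrot hE), gg_apply _ hE]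
  have h1 : ∀ p : ℝ × ℝ,
      gaussianPDF 0 1 p.1 * gaussianPDF 0 1 p.2
        * ((fun p : ℝ × ℝ => (a * p.1 + b * p.2, -b * p.1 + a * p.2)) ⁻¹' E).indicator 1 p
      = (fun q : ℝ × ℝ => gaussianPDF 0 1 q.1 * gaussianPDF 0 1 q.2 * E.indicator 1 q)
          ((a * p.1 + b * p.2, -b * p.1 + a * p.2)) := by
    intro p
    simp only
    rw [gaussianPDF_rot a b hab p]
    rfl
  rw [lintegral_congr h1]
  have hG : Measurable (fun q : ℝ × ℝ =>
      gaussianPDF 0 1 q.1 * gaussianPDF 0 1 q.2 * E.indicator 1 q) :=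
    (((measurable_gaussianPDF 0 1).comp measurable_fst).mul
      ((measurable_gaussianPDF 0 1).comp measurable_snd)).mul
      (measurable_one.indicator hE)
  conv_rhs => rw [← map_rot_volume a b hab]
  rw [lintegral_map hG hrot]

/-- Grouping a doubly-indexed independent family into independent pairs. -/
lemma pair_iIndep {Ω : Type*} [MeasurableSpace Ω] (P : Measure Ω) [IsProbabilityMeasure P]
    (g : ℕ × Bool → Ω → ℝ) (hmeas : ∀ i, Measurable (g i))
    (hindep : iIndepFun g P) :
    iIndepFun
      (fun n ω => (g (n, false) ω, g (n, true) ω)) P := by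
  classical
  set h : ℕ → Ω → ℝ × ℝ := fun n ω => (g (n, false) ω, g (n, true) ω) with hh
  have hmeas_h : ∀ n, Measurable (h n) := fun n => (hmeas _).prodMk (hmeas _)
  rw [iIndepFun_iff_iIndep]
  set pisys : ℕ → Set (Set Ω) := fun n =>
    {S | ∃ p : Set ℝ × Set ℝ, MeasurableSet p.1 ∧ MeasurableSet p.2 ∧
      S = h n ⁻¹' (p.1 ×ˢ p.2)} with hpisys
  refine iIndepSets.iIndep (fun n => (hmeas_h n).comap_le) pisys ?_ ?_ ?_
  · rintro n S ⟨p, hp1, hp2, rfl⟩ T ⟨q, hq1, hq2, rfl⟩ -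
    exact ⟨(p.1 ∩ q.1, p.2 ∩ q.2), hp1.inter hq1, hp2.inter hq2, by
      rw [← Set.preimage_inter, Set.prod_inter_prod]⟩
  · intro n
    conv_lhs => rw [← generateFrom_prod]
    rw [MeasurableSpace.comap_generateFrom]
    congr 1
    ext S
    constructor
    · rintro ⟨U, ⟨s₁, hs₁, s₂, hs₂, rfl⟩, rfl⟩
      exact ⟨(s₁, s₂), hs₁, hs₂, rfl⟩
    · rintro ⟨p, hp1, hp2, rfl⟩
      exact ⟨p.1 ×ˢ p.2, ⟨p.1, hp1, p.2, hp2, rfl⟩, rfl⟩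
  · rw [iIndepSets_iff]
    intro S f' hf'
    have hex : ∀ n, ∃ p : Set ℝ × Set ℝ, MeasurableSet p.1 ∧ MeasurableSet p.2 ∧
        (n ∈ S → f' n = h n ⁻¹' (p.1 ×ˢ p.2)) := by
      intro n
      by_cases hn : n ∈ S
      · obtain ⟨p, hp1, hp2, hpe⟩ := hf' n hn
        exact ⟨p, hp1, hp2, fun _ => hpe⟩
      · exact ⟨(univ, univ), MeasurableSet.univ, MeasurableSet.univ, fun hn' => absurd hn' hn⟩
    choose B hB1 hB2 hBe using hex
    have hsets : ∀ n, n ∈ S → f' n = g (n, false) ⁻¹' (B n).1 ∩ g (n, true) ⁻¹' (B n).2 := by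
      intro n hn
      rw [hBe n hn]
      rfl
    set sets : ℕ × Bool → Set ℝ := fun j => if j.2 then (B j.1).2 else (B j.1).1 with hsets_def
    have hmeas_sets : ∀ j : ℕ × Bool, j ∈ S ×ˢ (Finset.univ : Finset Bool) →
        MeasurableSet (sets j) := by
      rintro ⟨n, b⟩ -
      cases b
      · exact hB1 n
      · exact hB2 n
    have hinter : (⋂ n ∈ S, f' n)
        = ⋂ j ∈ S ×ˢ (Finset.univ : Finset Bool), g j ⁻¹' sets j := by
      ext ω
      simp only [Set.mem_iInter, Finset.mem_product, Finset.mem_univ, and_true]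
      constructor
      · intro hω j hj
        have := hω j.1 hj
        rw [hsets j.1 hj] at this
        rcases j with ⟨n, b⟩
        cases b
        · exact this.1
        · exact this.2
      · intro hω n hn
        rw [hsets n hn]
        exact ⟨hω (n, false) hn, hω (n, true) hn⟩
    rw [hinter, hindep.measure_inter_preimage_eq_mul _ hmeas_sets, Finset.prod_product]
    refine Finset.prod_congr rfl fun n hn => ?_
    rw [hsets n hn]
    have hpair : IndepFun (g (n, false)) (g (n, true)) P :=
      hindep.indepFun (by simp)
    rw [hpair.measure_inter_preimage_eq_mul _ _ (hB1 n) (hB2 n)]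
    rw [Fintype.prod_bool]
    simp only [sets, if_true, if_false]
    norm_num
    ring

end WaveAux

open WaveAux

/-- Let `θ(t) = cos(t√H)u₀ + sin(t√H)/√H · u₁` where, in the
eigenbasis `(f_n)` of the positive self-adjoint operator `H` (with the paper's
convention that `√H` acts as `λ_n` on `f_n`),
`u₀ = Σ_n (g₀ⁿ/λ_n) f_n` and `u₁ = Σ_n g₁ⁿ f_n` with `(g₀ⁿ), (g₁ⁿ)` independent
standard Gaussians; so `θ(t) = Σ_n λ_n^{-1}(cos(tλ_n)g₀ⁿ + sin(tλ_n)g₁ⁿ)f_n`.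
Then for each fixed `t`, `θ(t)` has the same law as `u₀` (as a random sequence of
coefficients). -/
theorem wave_linear_flow_invariant_law {Ω : Type*} [MeasurableSpace Ω]
    (P : Measure Ω) [IsProbabilityMeasure P]
    (lam : ℕ → ℝ) (hlam : ∀ n, 0 < lam n)
    (g : ℕ × Bool → Ω → ℝ) (hmeas : ∀ i, Measurable (g i))
    (hgauss : ∀ i, Measure.map (g i) P = gaussianReal 0 1)
    (hindep : iIndepFun g P)
    (t : ℝ) :
    Measure.map (fun ω => fun n : ℕ =>
        (lam n)⁻¹ * (Real.cos (t * lam n) * g (n, false) ω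
          + Real.sin (t * lam n) * g (n, true) ω)) P
      = Measure.map (fun ω => fun n : ℕ => (lam n)⁻¹ * g (n, false) ω) P := by
  classical
  set h : ℕ → Ω → ℝ × ℝ := fun n ω => (g (n, false) ω, g (n, true) ω) with hh
  have hmeas_h : ∀ n, Measurable (h n) := fun n => (hmeas _).prodMk (hmeas _)
  have hindep_h := pair_iIndep P g hmeas hindep
  have hlaw : ∀ n, Measure.map (h n) P = (gaussianReal 0 1).prod (gaussianReal 0 1) := by
    intro n
    have hpair : IndepFun (g (n, false)) (g (n, true)) P := hindep.indepFun (by simp)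
    rw [indepFun_iff_map_prod_eq_prod_map_map (hmeas _).aemeasurable
      (hmeas _).aemeasurable] at hpair
    rw [hh]
    simp only
    rw [hpair, hgauss, hgauss]
  set F : Ω → ℕ → ℝ := fun ω => fun n : ℕ =>
    (lam n)⁻¹ * (Real.cos (t * lam n) * g (n, false) ω
      + Real.sin (t * lam n) * g (n, true) ω) with hF_def
  set G : Ω → ℕ → ℝ := fun ω => fun n : ℕ => (lam n)⁻¹ * g (n, false) ω with hG_def
  have hF : Measurable F := measurable_pi_lambda _ fun n =>
    (((hmeas (n, false)).const_mul _).add ((hmeas (n, true)).const_mul _)).const_mul _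
  have hG : Measurable G := measurable_pi_lambda _ fun n => (hmeas (n, false)).const_mul _
  haveI : IsProbabilityMeasure (Measure.map F P) := Measure.isProbabilityMeasure_map hF.aemeasurable
  haveI : IsProbabilityMeasure (Measure.map G P) := Measure.isProbabilityMeasure_map hG.aemeasurable
  refine ext_of_generate_finite
    (squareCylinders fun _ : ℕ => {s : Set ℝ | MeasurableSet s})
    generateFrom_squareCylinders.symm
    (isPiSystem_squareCylinders (fun _ => MeasurableSpace.isPiSystem_measurableSet)
      (fun _ => (MeasurableSet.univ : MeasurableSet (univ : Set ℝ)))) ?_ (by simp)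
  rintro W ⟨s, A, hA, rfl⟩
  have hAmeas : ∀ n, MeasurableSet (A n) := fun n => hA n (Set.mem_univ n)
  have hWmeas : MeasurableSet ((s : Set ℕ).pi A) :=
    MeasurableSet.pi s.countable_toSet fun n _ => hAmeas n
  set Bf : ℕ → Set (ℝ × ℝ) := fun n =>
    (fun p : ℝ × ℝ => (lam n)⁻¹ * (Real.cos (t * lam n) * p.1
      + Real.sin (t * lam n) * p.2)) ⁻¹' A n with hBf_def
  set Bg : ℕ → Set (ℝ × ℝ) := fun n =>
    (fun p : ℝ × ℝ => (lam n)⁻¹ * p.1) ⁻¹' A n with hBg_def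
  have hBf : ∀ n, MeasurableSet (Bf n) := fun n =>
    (by fun_prop : Measurable (fun p : ℝ × ℝ => (lam n)⁻¹ * (Real.cos (t * lam n) * p.1
      + Real.sin (t * lam n) * p.2))) (hAmeas n)
  have hBg : ∀ n, MeasurableSet (Bg n) := fun n =>
    (by fun_prop : Measurable (fun p : ℝ × ℝ => (lam n)⁻¹ * p.1)) (hAmeas n)
  have hFpre : F ⁻¹' ((s : Set ℕ).pi A) = ⋂ n ∈ s, h n ⁻¹' Bf n := by
    ext ω
    simp [Set.mem_pi, hF_def, hBf_def, hh]
  have hGpre : G ⁻¹' ((s : Set ℕ).pi A) = ⋂ n ∈ s, h n ⁻¹' Bg n := by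
    ext ω
    simp [Set.mem_pi, hG_def, hBg_def, hh]
  rw [Measure.map_apply hF hWmeas, Measure.map_apply hG hWmeas, hFpre, hGpre,
    hindep_h.measure_inter_preimage_eq_mul _ (fun n _ => hBf n),
    hindep_h.measure_inter_preimage_eq_mul _ (fun n _ => hBg n)]
  refine Finset.prod_congr rfl fun n _ => ?_
  have h1 : P (h n ⁻¹' Bf n) = ((gaussianReal 0 1).prod (gaussianReal 0 1)) (Bf n) := by
    rw [← hlaw n, Measure.map_apply (hmeas_h n) (hBf n)]
  have h2 : P (h n ⁻¹' Bg n) = ((gaussianReal 0 1).prod (gaussianReal 0 1)) (Bg n) := by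
    rw [← hlaw n, Measure.map_apply (hmeas_h n) (hBg n)]
  rw [h1, h2]
  have hrotmeas : Measurable (fun p : ℝ × ℝ =>
      (Real.cos (t * lam n) * p.1 + Real.sin (t * lam n) * p.2,
        -Real.sin (t * lam n) * p.1 + Real.cos (t * lam n) * p.2)) := by fun_prop
  have hBfg : Bf n = (fun p : ℝ × ℝ =>
      (Real.cos (t * lam n) * p.1 + Real.sin (t * lam n) * p.2,
        -Real.sin (t * lam n) * p.1 + Real.cos (t * lam n) * p.2)) ⁻¹' (Bg n) := rfl
  rw [hBfg, ← Measure.map_apply hrotmeas (hBg n),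
    map_rot_gaussian _ _ (by rw [Real.cos_sq_add_sin_sq])]
end

section
/- Let Φ_t be a measurable flow on a Polish space preserving a probability measure ν, and suppose there exist c > 0 and L ∈ ℕ such that whenever ‖φ‖ ≤ R, one has ‖Φ_t φ‖ ≤ 2‖φ‖ for all 0 ≤ t ≤ c(1+R)^{−L}. Suppose also ν(‖φ‖ > R) ≤ R^{−p} for all R ≥ 1 and some p > L. Then for every T > 0, ν(sup_{0≤t≤T} ‖Φ_t φ‖ > 2R) ≤ C(T)(1+R)^L R^{−p}, which tends to 0 as R → ∞. -/
open MeasureTheory Filter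

/-- **Bourgain globalization estimate.** Let `Φ_t` be a measurable flow
on a Polish space preserving a probability measure `ν`, `N` a norm functional, and
suppose a local bound: if `N φ ≤ R` then `N (Φ_t φ) ≤ 2 N φ` for `0 ≤ t ≤ c(1+R)^{−L}`;
and a tail bound `ν(N φ > R) ≤ R^{−p}` for `R ≥ 1`, with `p > L`. Then for every `T > 0`
there is `C(T)` with `ν(sup_{0≤t≤T} N(Φ_t φ) > 2R) ≤ C(T)(1+R)^L R^{−p} → 0`. -/
theorem bourgain_globalization {X : Type*} [TopologicalSpace X] [PolishSpace X]
    [MeasurableSpace X] [BorelSpace X]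
    (ν : Measure X) [IsProbabilityMeasure ν]
    (Φ : ℝ → X → X) (N : X → ℝ) (hN : ∀ x, 0 ≤ N x)
    (hmeas : ∀ t, Measurable (Φ t))
    (hflow0 : Φ 0 = id) (hflow : ∀ s t : ℝ, 0 ≤ s → 0 ≤ t → Φ (s + t) = Φ s ∘ Φ t)
    (hinv : ∀ t : ℝ, 0 ≤ t → Measure.map (Φ t) ν = ν)
    (c : ℝ) (hc : 0 < c) (L : ℕ) (p : ℝ) (hp : (L : ℝ) < p)
    (hloc : ∀ R : ℝ, 0 ≤ R → ∀ x : X, N x ≤ R →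
      ∀ t : ℝ, 0 ≤ t → t ≤ c * (1 + R) ^ (-(L : ℝ)) → N (Φ t x) ≤ 2 * N x)
    (htail : ∀ R : ℝ, 1 ≤ R → ν {x | R < N x} ≤ ENNReal.ofReal (R ^ (-p)))
    (T : ℝ) (hT : 0 < T) :
    ∃ CT : ℝ, 0 < CT ∧
      (∀ R : ℝ, 1 ≤ R →
        ν {x | ∃ t ∈ Set.Icc (0:ℝ) T, 2 * R < N (Φ t x)}
          ≤ ENNReal.ofReal (CT * (1 + R) ^ (L : ℝ) * R ^ (-p))) ∧
      Tendsto (fun R : ℝ => CT * (1 + R) ^ (L : ℝ) * R ^ (-p)) atTop (nhds 0) := by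
  refine ⟨T / c + 2, by positivity, ?_, ?_⟩
  · intro R hR
    have hR0 : (0:ℝ) ≤ R := le_trans zero_le_one hR
    have h1R : (0:ℝ) < 1 + R := by linarith
    set τ : ℝ := c * (1 + R) ^ (-(L : ℝ)) with hτdef
    have hτpos : 0 < τ := by positivity
    set n : ℕ := ⌈T / τ⌉₊ with hndef
    -- inclusion into union of preimages
    have hincl : {x | ∃ t ∈ Set.Icc (0:ℝ) T, 2 * R < N (Φ t x)} ⊆
        ⋃ k ∈ Finset.range (n + 1), (Φ ((k : ℝ) * τ)) ⁻¹' {x | R < N x} := by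
      intro x hx
      obtain ⟨t, ⟨ht0, htT⟩, hxt⟩ := hx
      by_contra hcon
      simp only [Set.mem_iUnion, Finset.mem_range, Set.mem_preimage, Set.mem_setOf_eq,
        not_exists, not_lt] at hcon
      set k : ℕ := ⌊t / τ⌋₊ with hkdef
      have hkn : k < n + 1 := by
        have h1 : t / τ ≤ T / τ := by gcongr
        have : k ≤ n := le_trans (Nat.floor_le_floor h1) (Nat.floor_le_ceil _)
        omega
      have hkt : (k : ℝ) * τ ≤ t := by
        have := Nat.floor_le (by positivity : 0 ≤ t / τ)
        calc (k : ℝ) * τ ≤ (t / τ) * τ := by gcongr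
          _ = t := by field_simp
      have hts : t < ((k : ℝ) + 1) * τ := by
        have := Nat.lt_floor_add_one (t / τ)
        calc t = (t / τ) * τ := by field_simp
          _ < ((k : ℝ) + 1) * τ := by gcongr
      have hkR : N (Φ ((k : ℝ) * τ) x) ≤ R := hcon k hkn
      have hs0 : 0 ≤ t - (k : ℝ) * τ := by linarith
      have hsτ : t - (k : ℝ) * τ ≤ τ := by nlinarith
      have hsplit : Φ t x = Φ (t - (k : ℝ) * τ) (Φ ((k : ℝ) * τ) x) := by
        conv_lhs => rw [show t = (t - (k : ℝ) * τ) + (k : ℝ) * τ by ring,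
          hflow _ _ hs0 (by positivity)]
        rfl
      have := hloc R hR0 (Φ ((k : ℝ) * τ) x) hkR (t - (k : ℝ) * τ) hs0 hsτ
      rw [hsplit] at hxt
      nlinarith
    calc ν {x | ∃ t ∈ Set.Icc (0:ℝ) T, 2 * R < N (Φ t x)}
        ≤ ν (⋃ k ∈ Finset.range (n + 1), (Φ ((k : ℝ) * τ)) ⁻¹' {x | R < N x}) :=
          measure_mono hincl
      _ ≤ ∑ k ∈ Finset.range (n + 1), ν ((Φ ((k : ℝ) * τ)) ⁻¹' {x | R < N x}) :=
          measure_biUnion_finset_le _ _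
      _ ≤ ∑ k ∈ Finset.range (n + 1), ENNReal.ofReal (R ^ (-p)) := by
          refine Finset.sum_le_sum fun k _ => ?_
          calc ν ((Φ ((k : ℝ) * τ)) ⁻¹' {x | R < N x})
              ≤ (Measure.map (Φ ((k : ℝ) * τ)) ν) {x | R < N x} :=
                Measure.le_map_apply (hmeas _).aemeasurable _
            _ = ν {x | R < N x} := by rw [hinv _ (by positivity)]
            _ ≤ ENNReal.ofReal (R ^ (-p)) := htail R hR
      _ = ((n + 1 : ℕ) : ENNReal) * ENNReal.ofReal (R ^ (-p)) := by
          rw [Finset.sum_const, Finset.card_range, nsmul_eq_mul]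
      _ = ENNReal.ofReal (((n:ℝ) + 1) * R ^ (-p)) := by
          rw [← ENNReal.ofReal_natCast, ← ENNReal.ofReal_mul (by positivity)]
          norm_num
      _ ≤ ENNReal.ofReal ((T / c + 2) * (1 + R) ^ (L : ℝ) * R ^ (-p)) := by
          apply ENNReal.ofReal_le_ofReal
          have hpow1 : (1:ℝ) ≤ (1 + R) ^ (L : ℝ) :=
            Real.one_le_rpow (by linarith) (by positivity)
          have hn1 : (n : ℝ) ≤ T / τ + 1 := le_of_lt (Nat.ceil_lt_add_one (by positivity))
          have hTτ : T / τ = T / c * (1 + R) ^ (L : ℝ) := by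
            rw [hτdef, Real.rpow_neg (le_of_lt h1R)]
            field_simp
          have : (n:ℝ) + 1 ≤ (T / c + 2) * (1 + R) ^ (L : ℝ) := by
            rw [hTτ] at hn1
            nlinarith [div_nonneg (le_of_lt hT) (le_of_lt hc)]
          have hRp : (0:ℝ) ≤ R ^ (-p) := by positivity
          nlinarith
  · -- tendsto 0
    have hnn : ∀ᶠ R : ℝ in atTop,
        0 ≤ (T / c + 2) * (1 + R) ^ (L : ℝ) * R ^ (-p) := by
      filter_upwards [eventually_ge_atTop (1:ℝ)] with R hR
      have : (0:ℝ) < 1 + R := by linarith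
      positivity
    have hle : ∀ᶠ R : ℝ in atTop, (T / c + 2) * (1 + R) ^ (L : ℝ) * R ^ (-p)
        ≤ ((T / c + 2) * 2 ^ (L : ℝ)) * R ^ ((L : ℝ) - p) := by
      filter_upwards [eventually_ge_atTop (1:ℝ)] with R hR
      have hR0 : (0:ℝ) < R := lt_of_lt_of_le zero_lt_one hR
      have h1 : (1 + R) ^ (L : ℝ) ≤ (2 * R) ^ (L : ℝ) := by
        apply Real.rpow_le_rpow (by linarith) (by linarith) (by positivity)
      have h2 : (2 * R) ^ (L : ℝ) = 2 ^ (L : ℝ) * R ^ (L : ℝ) :=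
        Real.mul_rpow (by norm_num) (le_of_lt hR0)
      have h3 : R ^ (L : ℝ) * R ^ (-p) = R ^ ((L : ℝ) - p) := by
        rw [← Real.rpow_add hR0]; ring_nf
      calc (T / c + 2) * (1 + R) ^ (L : ℝ) * R ^ (-p)
          ≤ (T / c + 2) * (2 ^ (L : ℝ) * R ^ (L : ℝ)) * R ^ (-p) := by
            rw [← h2]
            have hTc : (0:ℝ) ≤ T / c + 2 := by positivity
            gcongr
        _ = ((T / c + 2) * 2 ^ (L : ℝ)) * R ^ ((L : ℝ) - p) := by rw [← h3]; ring
    have hg : Tendsto (fun R : ℝ => ((T / c + 2) * 2 ^ (L : ℝ)) * R ^ ((L : ℝ) - p))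
        atTop (nhds 0) := by
      have h0 : Tendsto (fun R : ℝ => R ^ ((L : ℝ) - p)) atTop (nhds 0) := by
        have := tendsto_rpow_neg_atTop (y := p - (L:ℝ)) (by linarith)
        simpa [neg_sub] using this
      simpa using h0.const_mul ((T / c + 2) * 2 ^ (L : ℝ))
    exact squeeze_zero' hnn hle hg
end
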